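/- Let N be the Terenzi norm on ℓ¹. For every nonzero a ∈ ℓ¹ there exists a sequence (d_n) with d_n ∈ (0,1] for all n, d_n = 1 - 1/(n+1) for all sufficiently large n, and N(a) = Σ_{n=1}^∞ d_n |a_n|. -/
import Mathlib


/-- The Terenzi norm of the truncated sequence `(a 1, …, a m)`, defined recursively. -/
noncomputable def terenzi (a : ℕ → ℝ) : ℕ → ℝ
  | 0 => 0
  | 1 => |a 1|
  | (n+2) => (1 - 1/((n:ℝ)+3)) * (|a (n+2)| + terenzi a (n+1))
      + (1/((n:ℝ)+3)) * max (|a (n+2)| / ((n:ℝ)+2)) (terenzi a (n+1))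

lemma terenzi_nonneg (a : ℕ → ℝ) : ∀ n, 0 ≤ terenzi a n := by
  intro n
  induction n using Nat.strong_induction_on with
  | _ n ih =>
    match n with
    | 0 => simp [terenzi]
    | 1 => simp [terenzi]
    | (m+2) =>
      have h := ih (m+1) (by omega)
      rw [terenzi]
      have h3 : (0:ℝ) < (m:ℝ)+3 := by positivity
      have hc : (0:ℝ) < 1/((m:ℝ)+3) := by positivity
      have hc1 : 1/((m:ℝ)+3) < 1 := by rw [div_lt_one h3]; linarith
      have hx := abs_nonneg (a (m+2))
      have hm := le_max_right (|a (m+2)|/((m:ℝ)+2)) (terenzi a (m+1))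
      nlinarith

lemma terenzi_le_succ (a : ℕ → ℝ) (m : ℕ) : terenzi a (m+1) ≤ terenzi a (m+2) := by
  rw [terenzi]
  have h3 : (0:ℝ) < (m:ℝ)+3 := by positivity
  have hc : (0:ℝ) < 1/((m:ℝ)+3) := by positivity
  have hc1 : 1/((m:ℝ)+3) < 1 := by rw [div_lt_one h3]; linarith
  have hx := abs_nonneg (a (m+2))
  have hm := le_max_right (|a (m+2)|/((m:ℝ)+2)) (terenzi a (m+1))
  nlinarith

lemma terenzi_mono (a : ℕ → ℝ) {m n : ℕ} (hm : 1 ≤ m) (h : m ≤ n) :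
    terenzi a m ≤ terenzi a n := by
  induction n, h using Nat.le_induction with
  | base => exact le_rfl
  | succ n hn ih =>
    have h1 : 1 ≤ n := le_trans hm hn
    obtain ⟨j, rfl⟩ := Nat.exists_eq_add_of_le' h1
    exact le_trans ih (terenzi_le_succ a j)

lemma terenzi_pos (a : ℕ → ℝ) {n : ℕ} (hn : 1 ≤ n) (h : a n ≠ 0) : 0 < terenzi a n := by
  match n with
  | 1 => simpa [terenzi] using h
  | (m+2) =>
    rw [terenzi]
    have h3 : (0:ℝ) < (m:ℝ)+3 := by positivity
    have hc : (0:ℝ) < 1/((m:ℝ)+3) := by positivity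
    have hc1 : 1/((m:ℝ)+3) < 1 := by rw [div_lt_one h3]; linarith
    have hx : 0 < |a (m+2)| := abs_pos.mpr h
    have hT := terenzi_nonneg a (m+1)
    have hm := le_max_right (|a (m+2)|/((m:ℝ)+2)) (terenzi a (m+1))
    nlinarith

lemma terenzi_step (a : ℕ → ℝ) (m : ℕ)
    (h : |a (m+2)| / ((m:ℝ)+2) ≤ terenzi a (m+1)) :
    terenzi a (m+2) = (1 - 1/((m:ℝ)+3)) * |a (m+2)| + terenzi a (m+1) := by
  rw [terenzi, max_eq_right h]; ring

lemma terenzi_rep (a : ℕ → ℝ) : ∀ m, 1 ≤ m → ∃ d : ℕ → ℝ,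
    (∀ n, 1 ≤ n → n ≤ m → 0 < d n ∧ d n ≤ 1) ∧
    terenzi a m = ∑ n ∈ Finset.Icc 1 m, d n * |a n| := by
  intro m hm
  induction m, hm using Nat.le_induction with
  | base =>
    refine ⟨fun _ => 1, fun n h1 h2 => by norm_num, ?_⟩
    simp [terenzi]
  | succ m hm ih =>
    obtain ⟨d, hd, hsum⟩ := ih
    obtain ⟨k, rfl⟩ := Nat.exists_eq_add_of_le' hm
    have hk2 : (0:ℝ) < (k:ℝ)+2 := by positivity
    have hk3 : (0:ℝ) < (k:ℝ)+3 := by positivity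
    have hc : (0:ℝ) < 1/((k:ℝ)+3) := by positivity
    have hc1 : 1/((k:ℝ)+3) < 1 := by rw [div_lt_one hk3]; linarith
    rcases le_or_gt (|a (k+2)| / ((k:ℝ)+2)) (terenzi a (k+1)) with h | h
    · refine ⟨Function.update d (k+2) (1 - 1/((k:ℝ)+3)), ?_, ?_⟩
      · intro n h1 h2
        rcases eq_or_ne n (k+2) with rfl | hne
        · rw [Function.update_self]
          exact ⟨by linarith, by linarith⟩
        · rw [Function.update_of_ne hne]
          exact hd n h1 (by omega)
      · rw [show k+1+1 = k+2 from rfl, terenzi_step a k h,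
          Finset.sum_Icc_succ_top (by omega : 1 ≤ k+2)]
        rw [Function.update_self]
        have : ∑ n ∈ Finset.Icc 1 (k+1), Function.update d (k+2) (1 - 1/((k:ℝ)+3)) n * |a n|
            = ∑ n ∈ Finset.Icc 1 (k+1), d n * |a n| := by
          apply Finset.sum_congr rfl
          intro n hn
          rw [Function.update_of_ne]
          simp only [Finset.mem_Icc] at hn; omega
        rw [this, ← hsum]; ring
    · refine ⟨Function.update (fun n => (1 - 1/((k:ℝ)+3)) * d n) (k+2)
        ((1 - 1/((k:ℝ)+3)) + (1/((k:ℝ)+3))/((k:ℝ)+2)), ?_, ?_⟩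
      · intro n h1 h2
        rcases eq_or_ne n (k+2) with rfl | hne
        · rw [Function.update_self]
          have posdiv : 0 < (1/((k:ℝ)+3))/((k:ℝ)+2) := by positivity
          have h2k : (1/((k:ℝ)+3))/((k:ℝ)+2) ≤ 1/((k:ℝ)+3) := by
            apply div_le_self (le_of_lt hc); linarith
          exact ⟨by linarith, by linarith⟩
        · rw [Function.update_of_ne hne]
          obtain ⟨hp, hle⟩ := hd n h1 (by omega)
          exact ⟨mul_pos (by linarith) hp, by nlinarith⟩
      · rw [show k+1+1 = k+2 from rfl, terenzi, max_eq_left (le_of_lt h),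
          Finset.sum_Icc_succ_top (by omega : 1 ≤ k+2), Function.update_self]
        have : ∑ n ∈ Finset.Icc 1 (k+1), Function.update (fun n => (1 - 1/((k:ℝ)+3)) * d n) (k+2)
            ((1 - 1/((k:ℝ)+3)) + (1/((k:ℝ)+3))/((k:ℝ)+2)) n * |a n|
            = (1 - 1/((k:ℝ)+3)) * ∑ n ∈ Finset.Icc 1 (k+1), d n * |a n| := by
          rw [Finset.mul_sum]
          apply Finset.sum_congr rfl
          intro n hn
          simp only [Finset.mem_Icc] at hn
          rw [Function.update_of_ne (by omega)]
          ring
        rw [this, ← hsum]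
        field_simp
        ring

theorem terenzi_representation_infinite (a : ℕ → ℝ) (L : ℝ)
    (hsum : Summable (fun n => |a n|))
    (hL : Filter.Tendsto (terenzi a) Filter.atTop (nhds L))
    (hne : ∃ n, 1 ≤ n ∧ a n ≠ 0) :
    ∃ d : ℕ → ℝ, (∀ n, 1 ≤ n → 0 < d n ∧ d n ≤ 1) ∧
      (∃ k : ℕ, ∀ n ≥ k, d n = 1 - 1/((n:ℝ)+1)) ∧
      L = ∑' n : ℕ, if 1 ≤ n then d n * |a n| else 0 := by
  obtain ⟨n0, hn0, ha0⟩ := hne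
  set ε := terenzi a n0 with hε
  have hεpos : 0 < ε := terenzi_pos a hn0 ha0
  -- find M such that |a n| ≤ ε for n ≥ M
  have htends : Filter.Tendsto (fun n => |a n|) Filter.atTop (nhds 0) :=
    hsum.tendsto_atTop_zero
  have hev : ∀ᶠ n in Filter.atTop, |a n| < ε := htends.eventually_lt_const hεpos
  obtain ⟨M, hM⟩ := Filter.eventually_atTop.mp hev
  set K := max n0 M with hK
  have hK1 : 1 ≤ K := le_trans hn0 (le_max_left _ _)
  have hKn0 : n0 ≤ K := le_max_left _ _
  have hKM : M ≤ K := le_max_right _ _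
  -- key step: for n ≥ K, terenzi a (n+1) = (1 - 1/(n+2)) * |a (n+1)| + terenzi a n
  have hstep : ∀ n, K ≤ n →
      terenzi a (n+1) = (1 - 1/((n:ℝ)+2)) * |a (n+1)| + terenzi a n := by
    intro n hn
    obtain ⟨j, rfl⟩ := Nat.exists_eq_add_of_le' (le_trans hK1 hn)
    have hmax : |a (j+2)| / ((j:ℝ)+2) ≤ terenzi a (j+1) := by
      have h1 : |a (j+2)| ≤ ε := le_of_lt (hM (j+2) (by omega))
      have h2 : ε ≤ terenzi a (j+1) := terenzi_mono a hn0 (le_trans hKn0 hn)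
      have h3 : |a (j+2)| / ((j:ℝ)+2) ≤ |a (j+2)| := by
        apply div_le_self (abs_nonneg _)
        have : (0:ℝ) ≤ (j:ℝ) := Nat.cast_nonneg j
        linarith
      linarith
    rw [show j+1+1 = j+2 from rfl, terenzi_step a j hmax]
    push_cast
    ring_nf
  -- the tail function
  set f : ℕ → ℝ := fun n => if K < n then (1 - 1/((n:ℝ)+1)) * |a n| else 0 with hf
  have hf_nonneg : ∀ n, 0 ≤ f n := by
    intro n
    simp only [hf]
    split
    · rename_i hn
      have : (0:ℝ) < (n:ℝ)+1 := by positivity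
      have : 1/((n:ℝ)+1) ≤ 1 := by rw [div_le_one this]; linarith
      have := abs_nonneg (a n)
      nlinarith
    · exact le_rfl
  have hf_le : ∀ n, f n ≤ |a n| := by
    intro n
    simp only [hf]
    split
    · have : (0:ℝ) < (n:ℝ)+1 := by positivity
      have h1 : (0:ℝ) < 1/((n:ℝ)+1) := by positivity
      have := abs_nonneg (a n)
      nlinarith
    · exact abs_nonneg _
  have hf_summable : Summable f := hsum.of_nonneg_of_le hf_nonneg hf_le
  -- partial sums of f: terenzi a n = terenzi a K + ∑_{m < n+1} f m for n ≥ K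
  have hpartial : ∀ n, K ≤ n →
      terenzi a n = terenzi a K + ∑ m ∈ Finset.range (n+1), f m := by
    intro n hn
    induction n, hn using Nat.le_induction with
    | base =>
      have : ∑ m ∈ Finset.range (K+1), f m = 0 := by
        apply Finset.sum_eq_zero
        intro m hm
        simp only [Finset.mem_range] at hm
        simp only [hf, if_neg (by omega : ¬ K < m)]
      rw [this]; ring
    | succ n hn ih =>
      rw [Finset.sum_range_succ, hstep n hn, ih]
      have : f (n+1) = (1 - 1/((n:ℝ)+2)) * |a (n+1)| := by
        simp only [hf, if_pos (by omega : K < n+1)]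
        push_cast; ring_nf
      rw [this]; ring
  -- tsum f = L - terenzi a K
  have hfsum_val : ∑' n, f n = L - terenzi a K := by
    have h1 : Filter.Tendsto (fun n => ∑ m ∈ Finset.range (n+1), f m)
        Filter.atTop (nhds (∑' n, f n)) :=
      (hf_summable.hasSum.tendsto_sum_nat).comp (Filter.tendsto_add_atTop_nat 1)
    have h2 : Filter.Tendsto (fun n => ∑ m ∈ Finset.range (n+1), f m)
        Filter.atTop (nhds (L - terenzi a K)) := by
      apply Filter.Tendsto.congr' _ (hL.sub_const (terenzi a K))
      filter_upwards [Filter.eventually_ge_atTop K] with n hn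
      rw [hpartial n hn]; ring
    exact tendsto_nhds_unique h1 h2
  -- finite representation up to K
  obtain ⟨dfin, hdfin, hfin⟩ := terenzi_rep a K hK1
  set g : ℕ → ℝ := fun n => if 1 ≤ n ∧ n ≤ K then dfin n * |a n| else 0 with hg
  have hg_zero : ∀ n ∉ Finset.Icc 1 K, g n = 0 := by
    intro n hn
    simp only [Finset.mem_Icc, not_and, not_le] at hn
    simp only [hg]
    rw [if_neg]
    intro ⟨h1, h2⟩
    exact absurd (hn h1) (not_lt.mpr h2)
  have hg_summable : Summable g := summable_of_ne_finset_zero hg_zero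
  have hgsum_val : ∑' n, g n = terenzi a K := by
    rw [tsum_eq_sum hg_zero, hfin]
    apply Finset.sum_congr rfl
    intro n hn
    simp only [Finset.mem_Icc] at hn
    simp only [hg]
    rw [if_pos hn]
  -- assemble d
  refine ⟨fun n => if n ≤ K then dfin n else 1 - 1/((n:ℝ)+1), ?_, ?_, ?_⟩
  · intro n hn
    dsimp only
    split
    · rename_i h; exact hdfin n hn h
    · rename_i h
      have hn1 : (0:ℝ) < (n:ℝ)+1 := by positivity
      have h1 : 1/((n:ℝ)+1) < 1 := by
        rw [div_lt_one hn1]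
        have : (1:ℝ) ≤ (n:ℝ) := by exact_mod_cast hn
        linarith
      have h2 : (0:ℝ) < 1/((n:ℝ)+1) := by positivity
      exact ⟨by linarith, by linarith⟩
  · exact ⟨K+1, fun n hn => by dsimp only; rw [if_neg (by omega)]⟩
  · have hFeq : ∀ n : ℕ, (if 1 ≤ n then
        (if n ≤ K then dfin n else 1 - 1/((n:ℝ)+1)) * |a n| else 0) = g n + f n := by
      intro n
      simp only [hg, hf]
      split_ifs <;> (try (exfalso; omega)) <;> ring
    calc L = terenzi a K + (L - terenzi a K) := by ring
    _ = ∑' n, g n + ∑' n, f n := by rw [hgsum_val, hfsum_val]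
    _ = ∑' n, (g n + f n) := (Summable.tsum_add hg_summable hf_summable).symm
    _ = _ := by
      apply tsum_congr
      intro n
      exact (hFeq n).symm
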